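/- Let M, n, k be natural numbers with k ≥ 1 and let L : ℝ^M × (Fin k → ℝ^n) → ℝ be smooth, with arguments written L(ξ, η_1, …, η_k). Let ξ : ℝ → ℝ^M and η_1, …, η_k : ℝ → ℝ^n be smooth curves, write γ(t) = (ξ(t), η_1(t), …, η_k(t)), and suppose there are smooth momenta π^1, …, π^k : ℝ → ℝ^n satisfying for all t and all a ∈ Fin n: k·π^1_a(t) = (∂L/∂η_k^a)(γ(t)); (π^U_a)'(t) = (∂L/∂η_{k−U}^a)(γ(t)) − (k−U)·π^{U+1}_a(t) for U = 1, …, k−1; and (π^k_a)'(t) = 0. Then for each a ∈ Fin n the function t ↦ ∑_{i=1}^{k} (−1)^{i−1} (1/i!) · (d/dt)^{i−1}[ s ↦ (∂L/∂η_i^a)(γ(s)) ](t) is constant on ℝ, and it equals π^k_a. -/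

import Mathlib

/-- Partial derivative of a Lagrangian `L(ξ, η)` with respect to the fibre
coordinate `η_w^a` (here `w : Fin k` corresponds to the weight `w + 1`). -/
noncomputable def pdVel {M n k : ℕ}
    (L : (Fin M → ℝ) × (Fin k → Fin n → ℝ) → ℝ)
    (w : Fin k) (a : Fin n) (p : (Fin M → ℝ) × (Fin k → Fin n → ℝ)) : ℝ :=
  fderiv ℝ L p (0, Pi.single w (Pi.single a 1))

private lemma fac_cast_succ (m : ℕ) (hm : 1 ≤ m) :
    (m.factorial : ℝ) = (m : ℝ) * ((m - 1).factorial : ℝ) := by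
  obtain ⟨p, rfl⟩ : ∃ p, m = p + 1 := ⟨m - 1, by omega⟩
  simp [Nat.factorial_succ]

/-- **Conserved momentum for abelian structure group.**
If the momenta `π^1, …, π^k` satisfy the phase-dynamics recursion
`k·π¹_a = ∂L/∂η_k^a ∘ γ`, `(π^U_a)' = ∂L/∂η_{k−U}^a ∘ γ − (k−U)·π^{U+1}_a`
and `(π^k_a)' = 0`, then the function
`t ↦ ∑_{i=1}^{k} (-1)^{i-1} (1/i!) (d/dt)^{i-1} (∂L/∂η_i^a ∘ γ)(t)`
is constant on `ℝ` and equals `π^k_a`. -/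
theorem abelian_conserved_momentum
    (M n k : ℕ) (hk : 1 ≤ k)
    (L : (Fin M → ℝ) × (Fin k → Fin n → ℝ) → ℝ) (hL : ContDiff ℝ (⊤ : ℕ∞) L)
    (ξ : ℝ → Fin M → ℝ) (hξ : ContDiff ℝ (⊤ : ℕ∞) ξ)
    (η : Fin k → ℝ → Fin n → ℝ) (hη : ∀ i, ContDiff ℝ (⊤ : ℕ∞) (η i))
    (γ : ℝ → (Fin M → ℝ) × (Fin k → Fin n → ℝ))
    (hγ : ∀ t, γ t = (ξ t, fun i => η i t))
    (π : ℕ → Fin n → ℝ → ℝ)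
    (hπ : ∀ U a, 1 ≤ U → U ≤ k → ContDiff ℝ (⊤ : ℕ∞) (π U a))
    (ha : ∀ t, ∀ a : Fin n,
      (k : ℝ) * π 1 a t = pdVel L ⟨k - 1, by omega⟩ a (γ t))
    (hb : ∀ U, 1 ≤ U → U ≤ k - 1 → ∀ t, ∀ a : Fin n,
      deriv (π U a) t =
        pdVel L ⟨k - U - 1, by omega⟩ a (γ t) - ((k : ℝ) - (U : ℝ)) * π (U + 1) a t)
    (hc : ∀ t, ∀ a : Fin n, deriv (π k a) t = 0) :
    ∀ Pmom : Fin n → ℝ → ℝ,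
      (∀ a t, Pmom a t = ∑ i : Fin k,
        ((-1 : ℝ)) ^ (i : ℕ) * (((i : ℕ) + 1).factorial : ℝ)⁻¹ *
          iteratedDeriv (i : ℕ) (fun s => pdVel L i a (γ s)) t) →
      ∀ a : Fin n,
        (∀ t s : ℝ, Pmom a t = Pmom a s) ∧ (∀ t : ℝ, Pmom a t = π k a t) := by
  intro Pmom hP a
  classical
  have hγeq : γ = fun t => (ξ t, fun i => η i t) := funext hγ
  have hγs : ContDiff ℝ (⊤ : ℕ∞) γ := by
    rw [hγeq]; exact hξ.prodMk (contDiff_pi.mpr hη)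
  -- the functions ∂L/∂η_{m+1}^a ∘ γ, extended by 0 outside range
  set f : ℕ → ℝ → ℝ :=
    fun m s => if h : m < k then pdVel L ⟨m, h⟩ a (γ s) else 0 with hfdef
  have hf : ∀ m, ContDiff ℝ (⊤ : ℕ∞) (f m) := by
    intro m
    by_cases h : m < k
    · have h1 : ContDiff ℝ (⊤ : ℕ∞) (fun p => pdVel L ⟨m, h⟩ a p) := by
        unfold pdVel
        exact (hL.fderiv_right (by simp)).clm_apply contDiff_const
      have h2 := h1.comp hγs
      have : f m = fun s => pdVel L ⟨m, h⟩ a (γ s) := by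
        funext s; simp [hfdef, h]
      rw [this]; exact h2
    · have : f m = fun _ => (0 : ℝ) := by funext s; simp [hfdef, h]
      rw [this]; exact contDiff_const
  have hfd : ∀ m j, Differentiable ℝ (iteratedDeriv j (f m)) := by
    intro m j
    rw [iteratedDeriv_eq_iterate]
    exact (ContDiff.iterate_deriv j ((hf m).of_le (by simp))).differentiable (by simp)
  -- the key induction
  have key : ∀ U, 1 ≤ U → U ≤ k → ∀ t, π U a t =
      ∑ j ∈ Finset.range U, (-1 : ℝ) ^ j * ((k - U).factorial : ℝ) *
        (((k - U + j + 1).factorial : ℝ))⁻¹ * iteratedDeriv j (f (k - U + j)) t := by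
    intro U hU1
    induction U, hU1 using Nat.le_induction with
    | base =>
      intro hUk t
      simp only [Finset.sum_range_one, Nat.add_zero, pow_zero, one_mul,
        iteratedDeriv_zero]
      have h1 : f (k - 1) t = pdVel L ⟨k - 1, by omega⟩ a (γ t) := by
        simp [hfdef, show k - 1 < k by omega]
      have h2 := ha t a
      rw [h1, ← h2]
      have h3 : k - 1 + 1 = k := by omega
      rw [h3, fac_cast_succ k hk]
      have hkpos : (k : ℝ) ≠ 0 := by positivity
      have hfacpos : ((k - 1).factorial : ℝ) ≠ 0 := by
        exact_mod_cast Nat.factorial_ne_zero _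
      field_simp
    | succ U hU IH =>
      intro hUk t
      have hUk' : U ≤ k - 1 := by omega
      have hIH := IH (by omega)
      -- derivative of π U a
      have hrec := hb U hU hUk' t a
      have hcast : ((k : ℝ) - (U : ℝ)) = ((k - U : ℕ) : ℝ) := by
        have : (U : ℝ) ≤ (k : ℝ) := by exact_mod_cast (by omega : U ≤ k)
        rw [Nat.cast_sub (by omega)]
      have hkU1 : 1 ≤ k - U := by omega
      have hkUne : ((k - U : ℕ) : ℝ) ≠ 0 := by
        have : 0 < k - U := by omega
        exact_mod_cast this.ne'
      -- compute deriv (π U a) t via IH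
      have hπeq : π U a = fun t => ∑ j ∈ Finset.range U, (-1 : ℝ) ^ j *
          ((k - U).factorial : ℝ) * (((k - U + j + 1).factorial : ℝ))⁻¹ *
          iteratedDeriv j (f (k - U + j)) t := funext fun t => hIH t
      have hder : deriv (π U a) t = ∑ j ∈ Finset.range U, (-1 : ℝ) ^ j *
          ((k - U).factorial : ℝ) * (((k - U + j + 1).factorial : ℝ))⁻¹ *
          iteratedDeriv (j + 1) (f (k - U + j)) t := by
        rw [hπeq]
        rw [deriv_fun_sum (fun j _ => (((hfd (k - U + j) j) t).const_mul _))]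
        refine Finset.sum_congr rfl fun j _ => ?_
        rw [deriv_const_mul _ ((hfd (k - U + j) j) t), iteratedDeriv_succ]
      -- solve for π (U+1) a t
      have hsolve : π (U + 1) a t = (((k - U : ℕ) : ℝ))⁻¹ *
          (f (k - U - 1) t - deriv (π U a) t) := by
        have h1 : f (k - U - 1) t = pdVel L ⟨k - U - 1, by omega⟩ a (γ t) := by
          simp [hfdef, show k - U - 1 < k by omega]
        rw [h1]
        rw [hcast] at hrec
        field_simp
        linarith [hrec]
      rw [hsolve, hder]
      rw [Finset.sum_range_succ']
      have hidx0 : k - (U + 1) + 0 = k - U - 1 := by omega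
      have hfac0 : ((k - (U + 1)).factorial : ℝ) *
          (((k - (U + 1) + 0 + 1).factorial : ℝ))⁻¹ = (((k - U : ℕ) : ℝ))⁻¹ := by
        have e1 : k - (U + 1) + 0 + 1 = k - U := by omega
        rw [e1, fac_cast_succ (k - U) hkU1]
        have e2 : k - U - 1 = k - (U + 1) := by omega
        rw [e2]
        have h2 : ((k - (U + 1)).factorial : ℝ) ≠ 0 := by
          exact_mod_cast Nat.factorial_ne_zero _
        field_simp
      rw [mul_sub, Finset.mul_sum]
      have hterm : ∀ j ∈ Finset.range U,
          (-1 : ℝ) ^ (j + 1) * ((k - (U + 1)).factorial : ℝ) *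
            (((k - (U + 1) + (j + 1) + 1).factorial : ℝ))⁻¹ *
            iteratedDeriv (j + 1) (f (k - (U + 1) + (j + 1))) t =
          -((((k - U : ℕ) : ℝ))⁻¹ * ((-1 : ℝ) ^ j * ((k - U).factorial : ℝ) *
            (((k - U + j + 1).factorial : ℝ))⁻¹ *
            iteratedDeriv (j + 1) (f (k - U + j)) t)) := by
        intro j _
        have e1 : k - (U + 1) + (j + 1) = k - U + j := by omega
        rw [e1]
        have e3 : ((k - U).factorial : ℝ) =
            ((k - U : ℕ) : ℝ) * ((k - (U + 1)).factorial : ℝ) := by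
          rw [fac_cast_succ (k - U) hkU1, show k - U - 1 = k - (U + 1) from by omega]
        rw [e3, pow_succ]
        have h2 : (((k - U + j + 1).factorial : ℝ)) ≠ 0 := by
          exact_mod_cast Nat.factorial_ne_zero _
        field_simp
      rw [Finset.sum_congr rfl hterm, Finset.sum_neg_distrib]
      have hterm0 : (-1 : ℝ) ^ 0 * ((k - (U + 1)).factorial : ℝ) *
          (((k - (U + 1) + 0 + 1).factorial : ℝ))⁻¹ *
          iteratedDeriv 0 (f (k - (U + 1) + 0)) t =
          (((k - U : ℕ) : ℝ))⁻¹ * f (k - U - 1) t := by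
        rw [iteratedDeriv_zero, pow_zero, one_mul, hfac0, hidx0]
      rw [hterm0]
      ring
  -- now specialize at U = k
  have hkey := key k hk le_rfl
  have hPval : ∀ t, Pmom a t = π k a t := by
    intro t
    rw [hP a t, hkey t]
    rw [← Fin.sum_univ_eq_sum_range (fun j => (-1 : ℝ) ^ j *
      ((k - k).factorial : ℝ) * (((k - k + j + 1).factorial : ℝ))⁻¹ *
      iteratedDeriv j (f (k - k + j)) t) k]
    refine Finset.sum_congr rfl fun i _ => ?_
    have e1 : k - k + (i : ℕ) = (i : ℕ) := by omega
    have e3 : f (i : ℕ) = fun s => pdVel L i a (γ s) := by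
      funext s
      simp only [hfdef, i.isLt, dif_pos, Fin.eta]
    rw [e1, e3]
    simp [Nat.sub_self]
  refine ⟨fun t s => ?_, hPval⟩
  have hconst : ∀ t s, π k a t = π k a s := fun t s =>
    is_const_of_deriv_eq_zero ((hπ k a hk le_rfl).differentiable (by simp))
      (fun x => hc x a) t s
  rw [hPval t, hPval s, hconst t s]
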